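/- arXiv:quant-ph/0402014 — 3 statements merged into one kernel-verified Lean document; each statement's English description precedes it below -/
import Mathlib

section
/- Let H₁, H₂, H₃ be finite-dimensional complex inner product spaces, g : H₁ → H₂ and f : H₂ → H₃ conjugate-linear maps, and φ ∈ H₁. Then (P_g ⊗ id_{H₃})(α(φ ⊗ₜ Ψ_f)) = Ψ_g ⊗ₜ ((f ∘ g) φ), where α : H₁ ⊗ (H₂ ⊗ H₃) ≃ (H₁ ⊗ H₂) ⊗ H₃ is the canonical associator and f ∘ g : H₁ → H₃ is ℂ-linear. (This is the basic teleportation identity: projecting the first two factors of φ ⊗ Ψ_f onto the state Ψ_g leaves the third factor exactly in the state (f ∘ g)(φ).) -/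
open scoped TensorProduct ComplexConjugate ComplexInnerProductSpace

/-! Expanding `Ψ_f = ∑ j, b₂ j ⊗ₜ f (b₂ j)`, the projector turns each summand into
`Ψ_g ⊗ₜ (⟪g φ, b₂ j⟫ • f (b₂ j))`, and since `f` is conjugate-linear,
`∑ j, ⟪g φ, b₂ j⟫ • f (b₂ j) = f (∑ j, ⟪b₂ j, g φ⟫ • b₂ j) = f (g φ)`. -/

noncomputable section

/-- The state `Ψ_f = ∑ i, b i ⊗ₜ f (b i)` associated to a conjugate-linear map `f`
and an orthonormal basis `b`. -/
def PsiState {H₁ H₂ : Type*} [NormedAddCommGroup H₁] [InnerProductSpace ℂ H₁]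
    [NormedAddCommGroup H₂] [InnerProductSpace ℂ H₂]
    {ι : Type*} [Fintype ι] (b : OrthonormalBasis ι ℂ H₁) (f : H₁ →ₗ⋆[ℂ] H₂) :
    H₁ ⊗[ℂ] H₂ := ∑ i, b i ⊗ₜ[ℂ] f (b i)

/-- The functional `ε_g : H₁ ⊗ H₂ →ₗ[ℂ] ℂ`, `ε_g (φ ⊗ₜ ψ) = ⟪g φ, ψ⟫`, associated to a
conjugate-linear map `g`. -/
def epsFun {H₁ H₂ : Type*} [NormedAddCommGroup H₁] [InnerProductSpace ℂ H₁]
    [NormedAddCommGroup H₂] [InnerProductSpace ℂ H₂] (g : H₁ →ₗ⋆[ℂ] H₂) :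
    H₁ ⊗[ℂ] H₂ →ₗ[ℂ] ℂ :=
  TensorProduct.lift <| LinearMap.mk₂ ℂ (fun φ ψ => ⟪g φ, ψ⟫)
    (fun φ φ' ψ => by simp [inner_add_left])
    (fun c φ ψ => by simp [inner_smul_left, mul_comm])
    (fun φ ψ ψ' => by simp [inner_add_right])
    (fun c φ ψ => by simp [inner_smul_right])

/-- The (unnormalized) projector `P_g x = ε_g x • Ψ_g` onto the state `Ψ_g` of a
conjugate-linear map `g`. -/
def Pproj {H₁ H₂ : Type*} [NormedAddCommGroup H₁] [InnerProductSpace ℂ H₁]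
    [NormedAddCommGroup H₂] [InnerProductSpace ℂ H₂]
    {ι : Type*} [Fintype ι] (b : OrthonormalBasis ι ℂ H₁) (g : H₁ →ₗ⋆[ℂ] H₂) :
    H₁ ⊗[ℂ] H₂ →ₗ[ℂ] H₁ ⊗[ℂ] H₂ :=
  (epsFun g).smulRight (PsiState b g)

theorem epsFun_tmul {H₁ H₂ : Type*} [NormedAddCommGroup H₁] [InnerProductSpace ℂ H₁]
    [NormedAddCommGroup H₂] [InnerProductSpace ℂ H₂] (g : H₁ →ₗ⋆[ℂ] H₂) (φ : H₁) (ψ : H₂) :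
    epsFun g (φ ⊗ₜ ψ) = ⟪g φ, ψ⟫ :=
  rfl

theorem OrthonormalBasis.sum_inner_smul_apply_conjLinear
    {H₂ H₃ : Type*} [NormedAddCommGroup H₂] [InnerProductSpace ℂ H₂] [AddCommGroup H₃] [Module ℂ H₃]
    {ι : Type*} [Fintype ι] (b : OrthonormalBasis ι ℂ H₂) (f : H₂ →ₗ⋆[ℂ] H₃) (v : H₂) :
    ∑ j, ⟪v, b j⟫ • f (b j) = f v := by
  conv_rhs => rw [← b.sum_repr' v]
  simp [map_sum, LinearMap.map_smulₛₗ]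

theorem map_Pproj_id_assoc_symm_tmul_tmul
    {H₁ H₂ H₃ : Type*} [NormedAddCommGroup H₁] [InnerProductSpace ℂ H₁]
    [NormedAddCommGroup H₂] [InnerProductSpace ℂ H₂] [AddCommGroup H₃] [Module ℂ H₃]
    {ι : Type*} [Fintype ι] (b : OrthonormalBasis ι ℂ H₁) (g : H₁ →ₗ⋆[ℂ] H₂)
    (φ : H₁) (ψ : H₂) (χ : H₃) :
    TensorProduct.map (Pproj b g) LinearMap.id
        ((TensorProduct.assoc ℂ H₁ H₂ H₃).symm (φ ⊗ₜ (ψ ⊗ₜ χ)))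
      = PsiState b g ⊗ₜ (⟪g φ, ψ⟫ • χ) := by
  rw [TensorProduct.assoc_symm_tmul, TensorProduct.map_tmul, Pproj, LinearMap.smulRight_apply,
    epsFun_tmul, LinearMap.id_apply, TensorProduct.smul_tmul]

theorem teleportation_identity_general
    {H₁ H₂ H₃ : Type*}
    [NormedAddCommGroup H₁] [InnerProductSpace ℂ H₁]
    [NormedAddCommGroup H₂] [InnerProductSpace ℂ H₂]
    [NormedAddCommGroup H₃] [InnerProductSpace ℂ H₃]
    {ι₁ ι₂ : Type*} [Fintype ι₁] [Fintype ι₂]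
    (b₁ : OrthonormalBasis ι₁ ℂ H₁) (b₂ : OrthonormalBasis ι₂ ℂ H₂)
    (g : H₁ →ₗ⋆[ℂ] H₂) (f : H₂ →ₗ⋆[ℂ] H₃) (φ : H₁) :
    TensorProduct.map (Pproj b₁ g) (LinearMap.id (R := ℂ) (M := H₃))
        ((TensorProduct.assoc ℂ H₁ H₂ H₃).symm (φ ⊗ₜ[ℂ] PsiState b₂ f))
      = PsiState b₁ g ⊗ₜ[ℂ] f (g φ) := by
  rw [show PsiState b₂ f = ∑ j, b₂ j ⊗ₜ f (b₂ j) from rfl, TensorProduct.tmul_sum, map_sum, map_sum]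
  simp only [map_Pproj_id_assoc_symm_tmul_tmul]
  rw [← TensorProduct.tmul_sum, b₂.sum_inner_smul_apply_conjLinear]

/-- the basic teleportation identity
`(P_g ⊗ id)(α(φ ⊗ₜ Ψ_f)) = Ψ_g ⊗ₜ ((f ∘ g) φ)`. -/
theorem teleportation_identity
    {H₁ H₂ H₃ : Type*}
    [NormedAddCommGroup H₁] [InnerProductSpace ℂ H₁] [FiniteDimensional ℂ H₁]
    [NormedAddCommGroup H₂] [InnerProductSpace ℂ H₂] [FiniteDimensional ℂ H₂]
    [NormedAddCommGroup H₃] [InnerProductSpace ℂ H₃] [FiniteDimensional ℂ H₃]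
    {ι₁ ι₂ : Type*} [Fintype ι₁] [Fintype ι₂]
    (b₁ : OrthonormalBasis ι₁ ℂ H₁) (b₂ : OrthonormalBasis ι₂ ℂ H₂)
    (g : H₁ →ₗ⋆[ℂ] H₂) (f : H₂ →ₗ⋆[ℂ] H₃) (φ : H₁) :
    TensorProduct.map (Pproj b₁ g) (LinearMap.id (R := ℂ) (M := H₃))
        ((TensorProduct.assoc ℂ H₁ H₂ H₃).symm (φ ⊗ₜ[ℂ] PsiState b₂ f))
      = PsiState b₁ g ⊗ₜ[ℂ] f (g φ) :=
  teleportation_identity_general b₁ b₂ g f φ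
end
end

section
/- Let m ≥ 1 and let H₀, H₁, …, H_{2m} be finite-dimensional complex inner product spaces. For each i ∈ {1, …, m} let g_i : H_{2i-2} → H_{2i-1} and f_i : H_{2i-1} → H_{2i} be conjugate-linear maps, and let φ ∈ H₀. In the iterated tensor product grouped as (H₀ ⊗ H₁) ⊗ (H₂ ⊗ H₃) ⊗ ⋯ ⊗ (H_{2m-2} ⊗ H_{2m-1}) ⊗ H_{2m}, let Θ be the image of φ ⊗ₜ Ψ_{f_1} ⊗ₜ ⋯ ⊗ₜ Ψ_{f_m} under the canonical reassociation regrouping the factors H₀, (H₁ ⊗ H₂), …, (H_{2m-1} ⊗ H_{2m}) into the pairs (H_{2i-2} ⊗ H_{2i-1}) followed by H_{2m}. Then applying the operator P_{g_1} ⊗ P_{g_2} ⊗ ⋯ ⊗ P_{g_m} ⊗ id_{H_{2m}} to Θ yields Ψ_{g_1} ⊗ₜ Ψ_{g_2} ⊗ₜ ⋯ ⊗ₜ Ψ_{g_m} ⊗ₜ ((f_m ∘ g_m ∘ ⋯ ∘ f_1 ∘ g_1) φ). (A chain of m entangled-state preparations f_i and m bipartite projections g_i realizes the composite f_m ∘ g_m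 ∘ ⋯ ∘ f_1 ∘ g_1 on the last factor; in particular, choices with f_i ∘ g_i equal to prescribed gates realize the sequential composite of those gates by one simultaneous parallel layer of projections.) -/
open scoped TensorProduct ComplexConjugate ComplexInnerProductSpace

noncomputable section

section Chain

variable (H : ℕ → Type) [∀ n, NormedAddCommGroup (H n)] [∀ n, InnerProductSpace ℂ (H n)]
  {ι : ℕ → Type} [∀ n, Fintype (ι n)] (b : ∀ n, OrthonormalBasis (ι n) ℂ (H n))

/-- The target grouping `(H (2m) ⊗ H (2m+1)) ⊗ ((H (2m+2) ⊗ H (2m+3)) ⊗ (⋯ ⊗ H (2m+2k)))`: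
`k` pairs followed by a single space. -/
def OutSpace : ℕ → ℕ → ModuleCat.{0} ℂ
  | m, 0 => ModuleCat.of ℂ (H (2*m))
  | m, k+1 => ModuleCat.of ℂ ((H (2*m) ⊗[ℂ] H (2*m+1)) ⊗[ℂ] OutSpace (m+1) k)

/-- The grouping `(H (2m+1) ⊗ H (2m+2)) ⊗ (⋯)` of `k+1` consecutive "state" pairs. -/
def WSpace : ℕ → ℕ → ModuleCat.{0} ℂ
  | m, 0 => ModuleCat.of ℂ (H (2*m+1) ⊗[ℂ] H (2*m+2))
  | m, k+1 => ModuleCat.of ℂ ((H (2*m+1) ⊗[ℂ] H (2*m+2)) ⊗[ℂ] WSpace (m+1) k)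

/-- The input grouping `H (2m) ⊗ ((H (2m+1) ⊗ H (2m+2)) ⊗ ⋯)`: a single space followed by
`k` pairs. -/
def InSpace : ℕ → ℕ → ModuleCat.{0} ℂ
  | m, 0 => ModuleCat.of ℂ (H (2*m))
  | m, k+1 => ModuleCat.of ℂ (H (2*m) ⊗[ℂ] WSpace H m k)

variable (f : ∀ i, H (2*i+1) →ₗ⋆[ℂ] H (2*i+2))

/-- The vector `Ψ_{f_m} ⊗ₜ (Ψ_{f_{m+1}} ⊗ₜ ⋯)` of `k+1` prepared states. -/
def WVec : (m k : ℕ) → WSpace H m k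
  | m, 0 => PsiState (b (2*m+1)) (f m)
  | m, k+1 => PsiState (b (2*m+1)) (f m) ⊗ₜ[ℂ] WVec (m+1) k

/-- The input vector `φ ⊗ₜ (Ψ_{f_m} ⊗ₜ ⋯)`. -/
def InVec : (m k : ℕ) → H (2*m) → InSpace H m k
  | _, 0, φ => φ
  | m, k+1, φ => φ ⊗ₜ[ℂ] WVec H b f m k

/-- The canonical reassociation regrouping the factors
`H (2m), (H (2m+1) ⊗ H (2m+2)), …, (H (2m+2k-1) ⊗ H (2m+2k))` into the pairs
`(H (2m) ⊗ H (2m+1)), …, (H (2m+2k-2) ⊗ H (2m+2k-1))` followed by `H (2m+2k)`. -/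
def reassoc : (m k : ℕ) → (InSpace H m k ≃ₗ[ℂ] OutSpace H m k)
  | m, 0 => LinearEquiv.refl ℂ (H (2*m))
  | m, 1 => (TensorProduct.assoc ℂ (H (2*m)) (H (2*m+1)) (H (2*m+2))).symm
  | m, k+2 =>
    (TensorProduct.congr (LinearEquiv.refl ℂ (H (2*m)))
        (TensorProduct.assoc ℂ (H (2*m+1)) (H (2*m+2)) (WSpace H (m+1) k))).trans <|
      ((TensorProduct.assoc ℂ (H (2*m)) (H (2*m+1))
          (H (2*m+2) ⊗[ℂ] WSpace H (m+1) k)).symm).trans <|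
        TensorProduct.congr (LinearEquiv.refl ℂ (H (2*m) ⊗[ℂ] H (2*m+1)))
          (reassoc (m+1) (k+1))

variable (g : ∀ i, H (2*i) →ₗ⋆[ℂ] H (2*i+1))

/-- The parallel layer of projectors `P_{g_m} ⊗ P_{g_{m+1}} ⊗ ⋯ ⊗ id`. -/
def POp : (m k : ℕ) → (OutSpace H m k →ₗ[ℂ] OutSpace H m k)
  | m, 0 => LinearMap.id
  | m, k+1 => TensorProduct.map (Pproj (b (2*m)) (g m)) (POp (m+1) k)

/-- The output vector `Ψ_{g_m} ⊗ₜ (Ψ_{g_{m+1}} ⊗ₜ (⋯ ⊗ₜ (f_{m+k-1} ∘ g_{m+k-1} ∘ ⋯ ∘ f_m ∘ g_m) φ))`. -/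
def OutVec : (m k : ℕ) → H (2*m) → OutSpace H m k
  | _, 0, φ => φ
  | m, k+1, φ => PsiState (b (2*m)) (g m) ⊗ₜ[ℂ] OutVec (m+1) k (f m (g m φ))

instance : RingHomCompTriple (starRingEnd ℂ) (starRingEnd ℂ) (RingHom.id ℂ) :=
  ⟨by ext z; simp⟩

lemma Pproj_tmul {H₁ H₂ : Type*} [NormedAddCommGroup H₁] [InnerProductSpace ℂ H₁]
    [NormedAddCommGroup H₂] [InnerProductSpace ℂ H₂]
    {κ : Type*} [Fintype κ] (c : OrthonormalBasis κ ℂ H₁) (g₀ : H₁ →ₗ⋆[ℂ] H₂)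
    (x : H₁) (y : H₂) :
    Pproj c g₀ (x ⊗ₜ[ℂ] y) = ⟪g₀ x, y⟫ • PsiState c g₀ := by
  simp [Pproj, epsFun]

/-- Resolution of identity through a conjugate-linear map. -/
lemma sum_inner_smulF {H₁ M : Type*} [NormedAddCommGroup H₁] [InnerProductSpace ℂ H₁]
    [AddCommMonoid M] [Module ℂ M]
    {κ : Type*} [Fintype κ] (c : OrthonormalBasis κ ℂ H₁)
    (F : H₁ →ₛₗ[starRingEnd ℂ] M) (ψ : H₁) :
    ∑ i, ⟪ψ, c i⟫ • F (c i) = F ψ := by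
  conv_rhs => rw [← c.sum_repr ψ, map_sum]
  refine Finset.sum_congr rfl fun i _ => ?_
  rw [LinearMap.map_smulₛₗ, c.repr_apply_apply, inner_conj_symm]

/-- `OutVec` packaged as a `ℂ`-linear map in `φ`. -/
def OutVecL : (m k : ℕ) → (H (2*m) →ₗ[ℂ] OutSpace H m k)
  | _, 0 => LinearMap.id
  | m, k+1 =>
    (TensorProduct.mk ℂ (H (2*m) ⊗[ℂ] H (2*m+1)) (OutSpace H (m+1) k)
        (PsiState (b (2*m)) (g m))).comp
      ((OutVecL (m+1) k).comp ((f m).comp (g m)))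

lemma OutVecL_apply : ∀ (m k : ℕ) (φ : H (2*m)),
    OutVecL H b f g m k φ = OutVec H b f g m k φ
  | _, 0, φ => rfl
  | m, k+1, φ => by
    show PsiState (b (2*m)) (g m) ⊗ₜ[ℂ] OutVecL H b f g (m+1) k (f m (g m φ)) = _
    rw [OutVecL_apply (m+1) k]
    rfl

lemma parallel_composition_key [∀ n, FiniteDimensional ℂ (H n)] :
    ∀ (k m : ℕ) (φ : H (2*m)),
    POp H b g m k (reassoc H m k (InVec H b f m k φ)) = OutVec H b f g m k φ
  | 0, m, φ => rfl
  | 1, m, φ => by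
    show TensorProduct.map (Pproj (b (2*m)) (g m)) (POp H b g (m+1) 0)
        ((TensorProduct.assoc ℂ (H (2*m)) (H (2*m+1)) (H (2*m+2))).symm
          (φ ⊗ₜ[ℂ] PsiState (b (2*m+1)) (f m)))
      = PsiState (b (2*m)) (g m) ⊗ₜ[ℂ] OutVec H b f g (m+1) 0 (f m (g m φ))
    rw [show OutVec H b f g (m+1) 0 (f m (g m φ)) = f m (g m φ) from rfl,
      ← sum_inner_smulF (b (2*m+1)) (f m) (g m φ)]
    conv_lhs => rw [PsiState]
    simp only [TensorProduct.tmul_sum, TensorProduct.sum_tmul, map_sum]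
    erw [map_sum, TensorProduct.tmul_sum]
    refine Finset.sum_congr rfl fun i _ => ?_
    rw [TensorProduct.assoc_symm_tmul]
    erw [TensorProduct.map_tmul]
    rw [Pproj_tmul,
      TensorProduct.smul_tmul]
    rfl
  | k+2, m, φ => by
    have IH : ∀ x : H (2*(m+1)),
        POp H b g (m+1) (k+1) (reassoc H (m+1) (k+1) (x ⊗ₜ[ℂ] WVec H b f (m+1) k))
          = OutVec H b f g (m+1) (k+1) x :=
      fun x => parallel_composition_key (k+1) (m+1) x
    have hsum : ∑ i, ⟪g m φ, b (2*m+1) i⟫ • OutVec H b f g (m+1) (k+1) (f m (b (2*m+1) i))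
        = OutVec H b f g (m+1) (k+1) (f m (g m φ)) := by
      simp only [← OutVecL_apply]
      exact sum_inner_smulF (b (2*m+1))
        ((OutVecL H b f g (m+1) (k+1)).comp (f m)) (g m φ)
    show (TensorProduct.map (Pproj (b (2*m)) (g m)) (POp H b g (m+1) (k+1)))
        ((TensorProduct.congr (LinearEquiv.refl ℂ (H (2*m) ⊗[ℂ] H (2*m+1)))
            (reassoc H (m+1) (k+1)))
          ((TensorProduct.assoc ℂ (H (2*m)) (H (2*m+1))
              (H (2*m+2) ⊗[ℂ] WSpace H (m+1) k)).symm
            ((TensorProduct.congr (LinearEquiv.refl ℂ (H (2*m)))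
                (TensorProduct.assoc ℂ (H (2*m+1)) (H (2*m+2)) (WSpace H (m+1) k)))
              (φ ⊗ₜ[ℂ] (PsiState (b (2*m+1)) (f m) ⊗ₜ[ℂ] WVec H b f (m+1) k)))))
      = PsiState (b (2*m)) (g m) ⊗ₜ[ℂ] OutVec H b f g (m+1) (k+1) (f m (g m φ))
    rw [← hsum]
    conv_lhs => rw [PsiState]
    simp only [TensorProduct.tmul_sum, TensorProduct.sum_tmul, map_sum]
    erw [map_sum, map_sum]
    refine Finset.sum_congr rfl fun i _ => ?_
    rw [TensorProduct.congr_tmul, LinearEquiv.refl_apply, TensorProduct.assoc_tmul,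
      TensorProduct.assoc_symm_tmul]
    have e : (TensorProduct.congr (LinearEquiv.refl ℂ (H (2*m) ⊗[ℂ] H (2*m+1)))
        (reassoc H (m+1) (k+1))) ((φ ⊗ₜ[ℂ] b (2*m+1) i) ⊗ₜ[ℂ]
          (f m (b (2*m+1) i) ⊗ₜ[ℂ] WVec H b f (m+1) k))
        = (φ ⊗ₜ[ℂ] b (2*m+1) i) ⊗ₜ[ℂ]
          reassoc H (m+1) (k+1) (f m (b (2*m+1) i) ⊗ₜ[ℂ] WVec H b f (m+1) k) :=
      TensorProduct.congr_tmul _ _ _ _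
    refine (congrArg (TensorProduct.map (Pproj (b (2*m)) (g m)) (POp H b g (m+1) (k+1))) e).trans ?_
    rw [TensorProduct.map_tmul, Pproj_tmul, TensorProduct.smul_tmul, IH]

/-- a chain of `m` entangled-state preparations `f_i` and one parallel layer of
`m` bipartite projections `g_i` realizes the composite `f_m ∘ g_m ∘ ⋯ ∘ f_1 ∘ g_1` on the
last factor:
`(P_{g_1} ⊗ ⋯ ⊗ P_{g_m} ⊗ id) Θ = Ψ_{g_1} ⊗ₜ ⋯ ⊗ₜ Ψ_{g_m} ⊗ₜ ((f_m ∘ g_m ∘ ⋯ ∘ f_1 ∘ g_1) φ)`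
where `Θ` is the canonical reassociation of `φ ⊗ₜ Ψ_{f_1} ⊗ₜ ⋯ ⊗ₜ Ψ_{f_m}`. -/
theorem parallel_composition_of_gates
    [∀ n, FiniteDimensional ℂ (H n)] (m : ℕ) (hm : 1 ≤ m) (φ : H 0) :
    POp H b g 0 m (reassoc H 0 m (InVec H b f 0 m φ)) = OutVec H b f g 0 m φ :=
  parallel_composition_key H b f g m 0 φ

end Chain
end
end

section
/- Let H₁ and H be finite-dimensional complex inner product spaces, f : H₁ → H and g : H → H conjugate-linear maps, and U a unitary operator on H such that g ∘ U = U ∘ g. Then for every φ ∈ H₁: (id_{H₁ ⊗ H} ⊗ U†)((P_{U ∘ f} ⊗ id_H)(α(φ ⊗ₜ Ψ_g))) = Ψ_{U ∘ f} ⊗ₜ ((g ∘ f) φ), where U ∘ f : H₁ → H is conjugate-linear, α : H₁ ⊗ (H ⊗ H) ≃ (H₁ ⊗ H) ⊗ H is the canonical associator, and g ∘ f : H₁ → H is ℂ-linear. (Measuring with the projector labeled U ∘ f and afterwards applying the unitary correction U† on the last factor produces the same output (g ∘ f)(φ) as measuring with the projector labeled f: the two paths are equivalent.) -/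
open scoped TensorProduct ComplexConjugate ComplexInnerProductSpace

noncomputable section

lemma sum_inner_smul_map {H H₂ : Type*} [NormedAddCommGroup H] [InnerProductSpace ℂ H]
    [NormedAddCommGroup H₂] [InnerProductSpace ℂ H₂] {ι : Type*} [Fintype ι]
    (b : OrthonormalBasis ι ℂ H) (g : H →ₗ⋆[ℂ] H₂) (x : H) :
    ∑ i, ⟪x, b i⟫ • g (b i) = g x := by
  conv_rhs => rw [← b.sum_repr' x, map_sum]
  refine Finset.sum_congr rfl fun i _ => ?_
  rw [LinearMap.map_smulₛₗ, inner_conj_symm]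

/-- equivalence of paths under a unitary correction (one space):
if `g ∘ U = U ∘ g` then
`(id ⊗ U†)((P_{U∘f} ⊗ id)(α(φ ⊗ₜ Ψ_g))) = Ψ_{U∘f} ⊗ₜ ((g ∘ f) φ)`. -/
theorem path_equivalence_commuting_unitary
    {H₁ H : Type*}
    [NormedAddCommGroup H₁] [InnerProductSpace ℂ H₁] [FiniteDimensional ℂ H₁]
    [NormedAddCommGroup H] [InnerProductSpace ℂ H] [FiniteDimensional ℂ H]
    {ι₁ ι : Type*} [Fintype ι₁] [Fintype ι]
    (b₁ : OrthonormalBasis ι₁ ℂ H₁) (b : OrthonormalBasis ι ℂ H)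
    (f : H₁ →ₗ⋆[ℂ] H) (g : H →ₗ⋆[ℂ] H)
    (U : H ≃ₗᵢ[ℂ] H)
    (hcomm : (g.comp U.toLinearEquiv.toLinearMap : H →ₗ⋆[ℂ] H)
           = (U.toLinearEquiv.toLinearMap.comp g : H →ₗ⋆[ℂ] H))
    (φ : H₁) :
    -- `U ∘ f : H₁ → H`, a conjugate-linear map
    letI Uf : H₁ →ₗ⋆[ℂ] H := U.toLinearEquiv.toLinearMap.comp f
    TensorProduct.map (LinearMap.id (R := ℂ) (M := H₁ ⊗[ℂ] H))
        U.symm.toLinearEquiv.toLinearMap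
        (TensorProduct.map (Pproj b₁ Uf) (LinearMap.id (R := ℂ) (M := H))
          ((TensorProduct.assoc ℂ H₁ H H).symm (φ ⊗ₜ[ℂ] PsiState b g)))
      = PsiState b₁ Uf ⊗ₜ[ℂ] g (f φ) := by
  set Uf : H₁ →ₗ⋆[ℂ] H := U.toLinearEquiv.toLinearMap.comp f with hUf
  show TensorProduct.map _ _ (TensorProduct.map (Pproj b₁ Uf) _ _) = _
  conv_lhs => rw [show PsiState b g = ∑ i, b i ⊗ₜ[ℂ] g (b i) from rfl]
  rw [TensorProduct.tmul_sum, map_sum, map_sum, map_sum]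
  have h1 : ∀ i, TensorProduct.map (LinearMap.id (R := ℂ) (M := H₁ ⊗[ℂ] H))
      U.symm.toLinearEquiv.toLinearMap
      (TensorProduct.map (Pproj b₁ Uf) (LinearMap.id (R := ℂ) (M := H))
        ((TensorProduct.assoc ℂ H₁ H H).symm (φ ⊗ₜ[ℂ] (b i ⊗ₜ[ℂ] g (b i)))))
      = PsiState b₁ Uf ⊗ₜ[ℂ] (⟪Uf φ, b i⟫ • U.symm (g (b i))) := by
    intro i
    rw [TensorProduct.assoc_symm_tmul, TensorProduct.map_tmul, TensorProduct.map_tmul]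
    have hP : Pproj b₁ Uf (φ ⊗ₜ[ℂ] b i) = ⟪Uf φ, b i⟫ • PsiState b₁ Uf := rfl
    rw [hP, LinearMap.id_apply, TensorProduct.smul_tmul]
    simp
  simp only [h1]
  rw [← TensorProduct.tmul_sum]
  congr 1
  have h2 : ∀ i, ⟪Uf φ, b i⟫ • U.symm (g (b i)) = U.symm (⟪Uf φ, b i⟫ • g (b i)) := by
    intro i; simp
  simp only [h2]
  rw [← map_sum, sum_inner_smul_map b g (Uf φ)]
  have h3 : g (Uf φ) = U (g (f φ)) := congrFun (congrArg DFunLike.coe hcomm) (f φ)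
  rw [h3]
  simp
end
end
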